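/- Suppose K : ℝ → ℝ is integrable with ∫K(u)du = 1, ∫uK(u)du = 0 and ∫u^2 K(u)du = 0 (with u·K(u) and u^2·K(u) integrable). Define Ǩ(t) = (Ǩ_+(t) + Ǩ_-(t))/2 with Ǩ_±(t) = Σ_{j=0,1,2} A_j(±r) K(t + (±r+1-j)δ). Then ∫u Ǩ(u)du = 0 and ∫u^2 Ǩ(u)du = 0. -/
import Mathlib


open MeasureTheory

/-- Variance-reduction interpolation coefficients. -/
noncomputable def A : ℕ → ℝ → ℝ
  | 0, r => r * (r - 1) / 2
  | 1, r => 1 - r ^ 2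
  | _, r => r * (r + 1) / 2

/-- The smoothed (variance-reduced) kernel. -/
noncomputable def Kcheck (K : ℝ → ℝ) (r δ : ℝ) : ℝ → ℝ := fun t =>
  ((∑ j ∈ Finset.range 3, A j r * K (t + (r + 1 - (j : ℝ)) * δ)) +
    (∑ j ∈ Finset.range 3, A j (-r) * K (t + (-r + 1 - (j : ℝ)) * δ))) / 2

section aux
variable {K : ℝ → ℝ}

lemma int1shift (hK : Integrable K) (hK1int : Integrable (fun u => u * K u)) (a : ℝ) :
    Integrable (fun u => u * K (u + a)) := by
  have h := (hK1int.sub (hK.const_mul a)).comp_add_right a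
  exact h.congr (Filter.Eventually.of_forall fun x => by simp; ring)

lemma int2shift (hK : Integrable K) (hK1int : Integrable (fun u => u * K u))
    (hK2int : Integrable (fun u => u ^ 2 * K u)) (a : ℝ) :
    Integrable (fun u => u ^ 2 * K (u + a)) := by
  have h := ((hK2int.sub ((hK1int.const_mul (2*a)))).add (hK.const_mul (a^2))).comp_add_right a
  exact h.congr (Filter.Eventually.of_forall fun x => by simp; ring)

lemma val1shift (hK : Integrable K) (hK1int : Integrable (fun u => u * K u))
    (hK0 : ∫ u, K u = 1) (hK1 : ∫ u, u * K u = 0) (a : ℝ) :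
    ∫ u, u * K (u + a) = -a := by
  have h := MeasureTheory.integral_add_right_eq_self (μ := volume) (fun v => (v - a) * K v) a
  have h2 : ∫ (x : ℝ), (x + a - a) * K (x + a) = ∫ (x : ℝ), x * K (x + a) := by
    congr 1; funext x; ring_nf
  rw [h2] at h
  have e : (fun v : ℝ => (v - a) * K v) = fun v => v * K v - a * K v := by funext v; ring
  rw [h, e, integral_sub hK1int (hK.const_mul a)]
  simp [hK0, hK1, MeasureTheory.integral_const_mul]

lemma val2shift (hK : Integrable K) (hK1int : Integrable (fun u => u * K u))
    (hK2int : Integrable (fun u => u ^ 2 * K u))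
    (hK0 : ∫ u, K u = 1) (hK1 : ∫ u, u * K u = 0) (hK2 : ∫ u, u ^ 2 * K u = 0) (a : ℝ) :
    ∫ u, u ^ 2 * K (u + a) = a ^ 2 := by
  have h := MeasureTheory.integral_add_right_eq_self (μ := volume) (fun v => (v - a) ^ 2 * K v) a
  have h2 : ∫ (x : ℝ), (x + a - a) ^ 2 * K (x + a) = ∫ (x : ℝ), x ^ 2 * K (x + a) := by
    congr 1; funext x; ring_nf
  rw [h2] at h
  have e : (fun v : ℝ => (v - a) ^ 2 * K v)
      = fun v => (v ^ 2 * K v - (2 * a) * (v * K v)) + a ^ 2 * K v := by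
    funext v; ring
  have i1 : Integrable (fun v : ℝ => v ^ 2 * K v - 2 * a * (v * K v)) :=
    hK2int.sub (hK1int.const_mul (2*a))
  rw [h, e, integral_add i1 (hK.const_mul (a^2)),
    integral_sub hK2int (hK1int.const_mul (2*a))]
  simp [hK0, hK1, hK2, MeasureTheory.integral_const_mul]

end aux


/-- If `K` integrates to `1` and has vanishing first and second moments, then
the smoothed kernel `Ǩ` also has vanishing first and second moments. -/
theorem Kcheck_moments (K : ℝ → ℝ) (hK : Integrable K)
    (hK1int : Integrable (fun u => u * K u))
    (hK2int : Integrable (fun u => u ^ 2 * K u))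
    (hK0 : ∫ u, K u = 1)
    (hK1 : ∫ u, u * K u = 0)
    (hK2 : ∫ u, u ^ 2 * K u = 0)
    (r δ : ℝ) :
    (∫ u, u * Kcheck K r δ u = 0) ∧ (∫ u, u ^ 2 * Kcheck K r δ u = 0) := by
  have hexp : ∀ u : ℝ, ∀ m : ℕ, u ^ m * Kcheck K r δ u =
      ∑ j ∈ Finset.range 3, (A j r / 2 * (u ^ m * K (u + (r + 1 - (j:ℝ)) * δ))
        + A j (-r) / 2 * (u ^ m * K (u + (-r + 1 - (j:ℝ)) * δ))) := by
    intro u m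
    simp only [Kcheck, Finset.sum_range_succ, Finset.sum_range_zero]
    ring
  constructor
  · have heq : (fun u : ℝ => u * Kcheck K r δ u) = fun u =>
        ∑ j ∈ Finset.range 3, (A j r / 2 * (u * K (u + (r + 1 - (j:ℝ)) * δ))
          + A j (-r) / 2 * (u * K (u + (-r + 1 - (j:ℝ)) * δ))) := by
      funext u
      have := hexp u 1
      simpa using this
    have hint : ∀ j ∈ Finset.range 3, Integrable (fun u : ℝ =>
        A j r / 2 * (u * K (u + (r + 1 - (j:ℝ)) * δ))
          + A j (-r) / 2 * (u * K (u + (-r + 1 - (j:ℝ)) * δ))) := fun j _ =>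
      ((int1shift hK hK1int _).const_mul _).add ((int1shift hK hK1int _).const_mul _)
    rw [heq, integral_finset_sum _ hint]
    have hval : ∀ j ∈ Finset.range 3,
        (∫ u, (A j r / 2 * (u * K (u + (r + 1 - (j:ℝ)) * δ))
          + A j (-r) / 2 * (u * K (u + (-r + 1 - (j:ℝ)) * δ)))) =
        A j r / 2 * (-((r + 1 - (j:ℝ)) * δ)) + A j (-r) / 2 * (-((-r + 1 - (j:ℝ)) * δ)) := by
      intro j _
      rw [integral_add ((int1shift hK hK1int _).const_mul _) ((int1shift hK hK1int _).const_mul _),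
        MeasureTheory.integral_const_mul, MeasureTheory.integral_const_mul,
        val1shift hK hK1int hK0 hK1, val1shift hK hK1int hK0 hK1]
    rw [Finset.sum_congr rfl hval]
    simp [Finset.sum_range_succ, A]
    ring
  · have heq : (fun u : ℝ => u ^ 2 * Kcheck K r δ u) = fun u =>
        ∑ j ∈ Finset.range 3, (A j r / 2 * (u ^ 2 * K (u + (r + 1 - (j:ℝ)) * δ))
          + A j (-r) / 2 * (u ^ 2 * K (u + (-r + 1 - (j:ℝ)) * δ))) := by
      funext u; exact hexp u 2
    have hint : ∀ j ∈ Finset.range 3, Integrable (fun u : ℝ =>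
        A j r / 2 * (u ^ 2 * K (u + (r + 1 - (j:ℝ)) * δ))
          + A j (-r) / 2 * (u ^ 2 * K (u + (-r + 1 - (j:ℝ)) * δ))) := fun j _ =>
      ((int2shift hK hK1int hK2int _).const_mul _).add ((int2shift hK hK1int hK2int _).const_mul _)
    rw [heq, integral_finset_sum _ hint]
    have hval : ∀ j ∈ Finset.range 3,
        (∫ u, (A j r / 2 * (u ^ 2 * K (u + (r + 1 - (j:ℝ)) * δ))
          + A j (-r) / 2 * (u ^ 2 * K (u + (-r + 1 - (j:ℝ)) * δ)))) =
        A j r / 2 * ((r + 1 - (j:ℝ)) * δ) ^ 2 + A j (-r) / 2 * ((-r + 1 - (j:ℝ)) * δ) ^ 2 := by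
      intro j _
      rw [integral_add ((int2shift hK hK1int hK2int _).const_mul _)
        ((int2shift hK hK1int hK2int _).const_mul _),
        MeasureTheory.integral_const_mul, MeasureTheory.integral_const_mul,
        val2shift hK hK1int hK2int hK0 hK1 hK2, val2shift hK hK1int hK2int hK0 hK1 hK2]
    rw [Finset.sum_congr rfl hval]
    simp [Finset.sum_range_succ, A]
    ring
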